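/- Let N_f, N_D, N_c, M be positive integers with 2 ≤ N_c ≤ N_f and 2 ≤ M ≤ N_D, let α ∈ ℂ with α ≠ 0, and let p₀, q₀ be integers with 0 ≤ p₀ < N_f and 0 ≤ q₀ < N_D. Define h(i,m) = α · exp(−2πi·i·p₀/N_f) · exp(2πi·m·q₀/N_D) for 0 ≤ i < N_c, 0 ≤ m < M, and the delay-Doppler spectrum magnitude P(p,q) = (1/N_D)·|Σ_{m=0}^{M−1} Σ_{i=0}^{N_c−1} h(i,m) · exp(2πi·p·i/N_f) · exp(−2πi·q·m/N_D)| for integers p, q. Then P(p₀,q₀) = N_c·M·|α|/N_D, and for every pair of integers (p,q) with 0 ≤ p < N_f, 0 ≤ q < N_D and (p,q) ≠ (p₀,q₀) one has P(p,q) < P(p₀,q₀); i.e., the spectral peak of the 2D-FFT spectrum is attained uniquely at the true delay-Doppler index. -/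

import Mathlib

open Finset Complex

/-!
After multiplying out, every summand of the spectrum at `(p, q)` is `α wⁱ zᵐ` with
`w = exp(2πi (p - p₀)/N_f)` and `z = exp(2πi (q₀ - q)/N_D)`, so the double sum factors into two
geometric sums of unit complex numbers. Each has modulus at most its number of terms, with
equality only for ratio `1`: the first two terms `1 + w` already have modulus `< 2` when `w ≠ 1`,
by strict convexity of `ℂ`. On the grid, `w = 1` forces `p = p₀` and `z = 1` forces `q = q₀`,
since `exp(2πi a/N)` is a primitive-root power that equals `1` only for `N ∣ a`.
-/

lemma norm_one_add_lt_two {z : ℂ} (hz : ‖z‖ ≤ 1) (hz1 : z ≠ 1) : ‖1 + z‖ < 2 := by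
  have h := norm_combo_lt_of_ne (a := (1 / 2 : ℝ)) (b := 1 / 2) norm_one.le hz hz1.symm
    (by norm_num) (by norm_num) (by norm_num)
  rw [← smul_add, norm_smul] at h
  norm_num at h
  linarith

lemma norm_geom_sum_le {z : ℂ} (hz : ‖z‖ ≤ 1) (n : ℕ) : ‖∑ k ∈ range n, z ^ k‖ ≤ n :=
  calc ‖∑ k ∈ range n, z ^ k‖ ≤ ∑ k ∈ range n, ‖z ^ k‖ := norm_sum_le _ _
    _ ≤ ∑ k ∈ range n, 1 := sum_le_sum fun k _ => by
        rw [norm_pow]; exact pow_le_one₀ (norm_nonneg z) hz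
    _ = n := by simp

lemma norm_geom_sum_lt {z : ℂ} (hz : ‖z‖ ≤ 1) (hz1 : z ≠ 1) {n : ℕ} (hn : 2 ≤ n) :
    ‖∑ k ∈ range n, z ^ k‖ < n := by
  obtain ⟨m, rfl⟩ := Nat.exists_eq_add_of_le' hn
  have hsplit : ∑ k ∈ range (m + 2), z ^ k = z ^ 2 * ∑ k ∈ range m, z ^ k + (1 + z) := by
    rw [sum_range_succ', sum_range_succ', mul_sum]
    simp only [add_assoc, ← pow_add, add_comm 2, zero_add, pow_one, pow_zero]
    ring
  calc ‖∑ k ∈ range (m + 2), z ^ k‖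
      ≤ ‖z ^ 2‖ * ‖∑ k ∈ range m, z ^ k‖ + ‖1 + z‖ := by
        rw [hsplit, ← norm_mul]; exact norm_add_le _ _
    _ < 1 * m + 2 := by
        refine add_lt_add_of_le_of_lt (mul_le_mul ?_ (norm_geom_sum_le hz m) (norm_nonneg _)
          zero_le_one) (norm_one_add_lt_two hz hz1)
        rw [norm_pow]; exact pow_le_one₀ (norm_nonneg z) hz
    _ = ↑(m + 2) := by push_cast; ring

lemma norm_geom_sum_mul_geom_sum_lt {w z : ℂ} (hw : ‖w‖ ≤ 1) (hz : ‖z‖ ≤ 1)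
    (hwz : w ≠ 1 ∨ z ≠ 1) {n m : ℕ} (hn : 2 ≤ n) (hm : 2 ≤ m) :
    ‖∑ i ∈ range n, w ^ i‖ * ‖∑ k ∈ range m, z ^ k‖ < n * m := by
  rcases hwz with hw1 | hz1
  · exact mul_lt_mul_of_lt_of_le_of_nonneg_of_pos (norm_geom_sum_lt hw hw1 hn)
      (norm_geom_sum_le hz m) (norm_nonneg _) (by positivity)
  · exact mul_lt_mul_of_le_of_lt_of_nonneg_of_pos (norm_geom_sum_le hw n)
      (norm_geom_sum_lt hz hz1 hm) (norm_nonneg _) (by positivity)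

noncomputable def gridPhase (N : ℕ) (a : ℤ) : ℂ := exp (2 * Real.pi * I * a / N)

lemma norm_gridPhase (N : ℕ) (a : ℤ) : ‖gridPhase N a‖ = 1 := by
  rw [gridPhase, norm_exp]
  simp

@[simp]
lemma gridPhase_zero (N : ℕ) : gridPhase N 0 = 1 := by
  simp [gridPhase]

lemma gridPhase_ne_one {N : ℕ} {a : ℤ} (ha : a ≠ 0) (haN : |a| < N) : gridPhase N a ≠ 1 := by
  have hN : N ≠ 0 := by rintro rfl; exact absurd haN (by simp)
  have hζ := isPrimitiveRoot_exp N hN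
  have hpow : gridPhase N a = exp (2 * Real.pi * I / N) ^ a := by
    rw [← exp_int_mul, gridPhase]; ring_nf
  rw [hpow, Ne, hζ.zpow_eq_one_iff_dvd]
  exact fun hdvd => ha (Int.eq_zero_of_abs_lt_dvd hdvd haN)

lemma gridPhase_ne_one_of_mem_grid {N : ℕ} {a b : ℤ} (hab : a ≠ b) (ha : 0 ≤ a ∧ a < N)
    (hb : 0 ≤ b ∧ b < N) : gridPhase N (a - b) ≠ 1 :=
  gridPhase_ne_one (sub_ne_zero.mpr hab) (abs_sub_lt_iff.mpr ⟨by omega, by omega⟩)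

theorem spectrum_peak_unique_on_grid_general
    (N_f N_D N_c M : ℕ)
    (hNc : 2 ≤ N_c) (hM : 2 ≤ M)
    (α : ℂ) (hα : α ≠ 0)
    (p₀ q₀ : ℤ) (hp₀ : 0 ≤ p₀ ∧ p₀ < N_f) (hq₀ : 0 ≤ q₀ ∧ q₀ < N_D)
    (h : ℕ → ℕ → ℂ)
    (hh : ∀ i m, h i m =
      α * Complex.exp (-(2 * Real.pi * Complex.I * i * p₀ / N_f)) *
        Complex.exp (2 * Real.pi * Complex.I * m * q₀ / N_D))
    (P : ℤ → ℤ → ℝ)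
    (hP : ∀ p q : ℤ, P p q = (1 / (N_D : ℝ)) *
      ‖(∑ m ∈ range M, ∑ i ∈ range N_c,
        h i m * Complex.exp (2 * Real.pi * Complex.I * p * i / N_f) *
          Complex.exp (-(2 * Real.pi * Complex.I * q * m / N_D)))‖) :
    P p₀ q₀ = (N_c : ℝ) * (M : ℝ) * ‖α‖ / (N_D : ℝ) ∧
      ∀ p q : ℤ, 0 ≤ p → p < N_f → 0 ≤ q → q < N_D →
        (p, q) ≠ (p₀, q₀) → P p q < P p₀ q₀ := by
  have hfactor : ∀ p q : ℤ, P p q = ‖α‖ * (‖∑ i ∈ range N_c, gridPhase N_f (p - p₀) ^ i‖ *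
      ‖∑ m ∈ range M, gridPhase N_D (q₀ - q) ^ m‖) / N_D := by
    intro p q
    have hterm : ∀ m i, h i m * exp (2 * Real.pi * I * p * i / N_f) *
        exp (-(2 * Real.pi * I * q * m / N_D)) =
        α * gridPhase N_f (p - p₀) ^ i * gridPhase N_D (q₀ - q) ^ m := by
      intro m i
      simp only [hh, gridPhase, ← exp_nat_mul, mul_assoc, ← exp_add]
      congr 2
      push_cast
      ring
    simp only [hP, hterm, ← mul_sum, ← sum_mul, norm_mul]
    ring
  refine ⟨by simp [hfactor]; ring, fun p q _ _ _ _ hne => ?_⟩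
  have hphase : gridPhase N_f (p - p₀) ≠ 1 ∨ gridPhase N_D (q₀ - q) ≠ 1 := by
    rcases eq_or_ne p p₀ with rfl | hp
    · exact .inr <| gridPhase_ne_one_of_mem_grid (fun hq => hne (by rw [hq])) hq₀
        ⟨by omega, by omega⟩
    · exact .inl <| gridPhase_ne_one_of_mem_grid hp ⟨by omega, by omega⟩ hp₀
  have hND : (0 : ℝ) < N_D := by exact_mod_cast (show 0 < N_D by omega)
  rw [hfactor, hfactor, sub_self, sub_self, gridPhase_zero, gridPhase_zero]
  simp only [one_pow, sum_const, card_range, nsmul_eq_mul, mul_one, Complex.norm_natCast]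
  exact div_lt_div_of_pos_right (mul_lt_mul_of_pos_left (norm_geom_sum_mul_geom_sum_lt
    (norm_gridPhase _ _).le (norm_gridPhase _ _).le hphase hNc hM) (norm_pos_iff.mpr hα)) hND

/-- The 2D-FFT delay-Doppler spectrum (15) of a noiseless single-path on-grid
channel attains its peak `N_c·M·|α|/N_D` exactly at the true grid index
`(p₀, q₀)`, and strictly below that value at every other grid index. -/
theorem spectrum_peak_unique_on_grid
    (N_f N_D N_c M : ℕ)
    (hNc : 2 ≤ N_c) (hcf : N_c ≤ N_f) (hM : 2 ≤ M) (hMD : M ≤ N_D)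
    (α : ℂ) (hα : α ≠ 0)
    (p₀ q₀ : ℤ) (hp₀ : 0 ≤ p₀ ∧ p₀ < N_f) (hq₀ : 0 ≤ q₀ ∧ q₀ < N_D)
    (h : ℕ → ℕ → ℂ)
    (hh : ∀ i m, h i m =
      α * Complex.exp (-(2 * Real.pi * Complex.I * i * p₀ / N_f)) *
        Complex.exp (2 * Real.pi * Complex.I * m * q₀ / N_D))
    (P : ℤ → ℤ → ℝ)
    (hP : ∀ p q : ℤ, P p q = (1 / (N_D : ℝ)) *
      ‖(∑ m ∈ range M, ∑ i ∈ range N_c,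
        h i m * Complex.exp (2 * Real.pi * Complex.I * p * i / N_f) *
          Complex.exp (-(2 * Real.pi * Complex.I * q * m / N_D)))‖) :
    P p₀ q₀ = (N_c : ℝ) * (M : ℝ) * ‖α‖ / (N_D : ℝ) ∧
      ∀ p q : ℤ, 0 ≤ p → p < N_f → 0 ≤ q → q < N_D →
        (p, q) ≠ (p₀, q₀) → P p q < P p₀ q₀ :=
  spectrum_peak_unique_on_grid_general N_f N_D N_c M hNc hM α hα p₀ q₀ hp₀ hq₀ h hh P hP
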